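/- Let d ≥ 2 be an integer, let e_1 be the first standard basis vector of ℝ^d, and let 0 < a < b ≤ 1 be reals. Then vol_d(B(e_1, 1, a, b)) ≤ v_{d−1} · (1−a²)^{(d−1)/2} · (1−a), where vol_d is Lebesgue measure on ℝ^d. -/

import Mathlib

open MeasureTheory Filter

/-- `vball n` is the Lebesgue volume of the closed unit Euclidean ball in ℝⁿ. -/
noncomputable def vball (n : ℕ) : ℝ :=
  (volume (Metric.closedBall (0 : EuclideanSpace ℝ (Fin n)) 1)).toReal

/-- The ballSlice B(x, r, a, b) of the ball B(x, r). -/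
noncomputable def ballSlice (d : ℕ) (x : EuclideanSpace ℝ (Fin d)) (r a b : ℝ) :
    Set (EuclideanSpace ℝ (Fin d)) :=
  if 0 < a then
    {y | ‖y - x‖ ≤ r ∧ a * r < (inner ℝ (y - x) (‖x‖⁻¹ • x) : ℝ) ∧
      (inner ℝ (y - x) (‖x‖⁻¹ • x) : ℝ) ≤ b * r}
  else
    {y | ‖y - x‖ ≤ r ∧ (inner ℝ (y - x) (‖x‖⁻¹ • x) : ℝ) ≤ b * r}

/-!
A point of the slice lies at height `t ∈ (a, b]` above `e₁` along the first axis, and at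
distance at most `√(1 - t²) ≤ √(1 - a²)` from that axis. So the slice sits inside the cylinder
with base `(1 + a, 1 + b]` and cross-section the `(d-1)`-ball of radius `√(1 - a²)`, whose volume
is `(b - a) · (1 - a²)^((d-1)/2) · v_{d-1} ≤ (1 - a) · (1 - a²)^((d-1)/2) · v_{d-1}`.
-/

namespace EuclideanSpace

variable {n : ℕ}

noncomputable def tail (y : EuclideanSpace ℝ (Fin (n + 1))) : EuclideanSpace ℝ (Fin n) :=
  WithLp.toLp 2 (Fin.tail (WithLp.ofLp y))

theorem norm_sq_eq_sq_add_norm_tail_sq (y : EuclideanSpace ℝ (Fin (n + 1))) :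
    ‖y‖ ^ 2 = y 0 ^ 2 + ‖tail y‖ ^ 2 := by
  simp only [real_norm_sq_eq, Fin.sum_univ_succ, tail]
  rfl

theorem tail_sub_single_zero (y : EuclideanSpace ℝ (Fin (n + 1))) (c : ℝ) :
    tail (y - single 0 c) = tail y := by
  ext j
  simp [tail, Fin.tail, Fin.succ_ne_zero]

noncomputable def cylinder (s : Set ℝ) (K : Set (EuclideanSpace ℝ (Fin n))) :
    Set (EuclideanSpace ℝ (Fin (n + 1))) :=
  {y | y 0 ∈ s ∧ tail y ∈ K}

theorem volume_cylinder {s : Set ℝ} {K : Set (EuclideanSpace ℝ (Fin n))} (hs : MeasurableSet s)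
    (hK : MeasurableSet K) : volume (cylinder s K) = volume s * volume K := by
  have hK' : MeasurableSet (WithLp.toLp 2 ⁻¹' K : Set (Fin n → ℝ)) :=
    (PiLp.volume_preserving_toLp (Fin n)).measurable hK
  have hcyl : cylinder s K = WithLp.ofLp ⁻¹'
      (MeasurableEquiv.piFinSuccAbove (fun _ ↦ ℝ) 0 ⁻¹' s ×ˢ (WithLp.toLp 2 ⁻¹' K)) := rfl
  rw [hcyl, (PiLp.volume_preserving_ofLp _).measure_preimage,
    (volume_preserving_piFinSuccAbove (fun _ ↦ ℝ) 0).measure_preimage, Measure.volume_eq_prod,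
    Measure.prod_prod, (PiLp.volume_preserving_toLp (Fin n)).measure_preimage hK.nullMeasurableSet]
  · exact (hs.prod hK').nullMeasurableSet
  · exact ((MeasurableEquiv.piFinSuccAbove _ 0).measurable (hs.prod hK')).nullMeasurableSet

theorem volume_closedBall_zero_toReal {r : ℝ} (hr : 0 ≤ r) :
    (volume (Metric.closedBall (0 : EuclideanSpace ℝ (Fin n)) r)).toReal = r ^ n * vball n := by
  rw [Measure.addHaar_closedBall' _ _ hr, finrank_euclideanSpace_fin, ENNReal.toReal_mul,
    ENNReal.toReal_ofReal (by positivity), vball]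

end EuclideanSpace

open EuclideanSpace

theorem inner_sub_single_zero_normalized {n : ℕ} (y : EuclideanSpace ℝ (Fin (n + 1))) :
    inner ℝ (y - single 0 1) (‖single (0 : Fin (n + 1)) (1 : ℝ)‖⁻¹ • single 0 1) = y 0 - 1 := by
  simp [inner_single_right]

theorem ballSlice_single_zero_subset_cylinder {n : ℕ} {a : ℝ} (ha : 0 < a) (b : ℝ) :
    ballSlice (n + 1) (single 0 1) 1 a b ⊆
      cylinder (Set.Ioc (1 + a) (1 + b)) (Metric.closedBall 0 √(1 - a ^ 2)) := by
  intro y hy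
  rw [ballSlice, if_pos ha] at hy
  obtain ⟨hdist, hlow, hupp⟩ := hy
  rw [inner_sub_single_zero_normalized] at hlow hupp
  have hsq : (y 0 - 1) ^ 2 + ‖tail y‖ ^ 2 ≤ 1 := by
    have h := norm_sq_eq_sq_add_norm_tail_sq (y - single 0 1)
    rw [tail_sub_single_zero] at h
    simp only [PiLp.sub_apply, PiLp.single_apply, if_true] at h
    rw [← h]
    exact pow_le_one₀ (norm_nonneg _) hdist
  refine ⟨⟨by linarith, by linarith⟩, ?_⟩
  rw [Metric.mem_closedBall, dist_zero_right]
  apply Real.le_sqrt_of_sq_le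
  nlinarith

/-- For d ≥ 2, e₁ the first standard basis vector of ℝ^d and 0 < a < b ≤ 1,
vol_d(B(e₁,1,a,b)) ≤ v_{d−1} · (1−a²)^{(d−1)/2} · (1−a). -/
theorem volume_slice_upper_bound (d : ℕ) (hd : 2 ≤ d) (a b : ℝ)
    (ha : 0 < a) (hab : a < b) (hb : b ≤ 1) :
    (volume (ballSlice d (EuclideanSpace.single (⟨0, by omega⟩ : Fin d) (1 : ℝ)) 1 a b)).toReal ≤
      vball (d - 1) * (1 - a ^ 2) ^ (((d : ℝ) - 1) / 2) * (1 - a) := by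
  obtain ⟨n, rfl⟩ : ∃ n, d = n + 1 := ⟨d - 1, by omega⟩
  have hr : 0 ≤ 1 - a ^ 2 := by nlinarith
  have hsqrt : √(1 - a ^ 2) ^ n = (1 - a ^ 2) ^ ((((n + 1 : ℕ) : ℝ) - 1) / 2) := by
    rw [Real.sqrt_eq_rpow, ← Real.rpow_natCast, ← Real.rpow_mul hr]
    push_cast
    ring_nf
  set C : Set (EuclideanSpace ℝ (Fin (n + 1))) :=
    cylinder (Set.Ioc (1 + a) (1 + b)) (Metric.closedBall 0 √(1 - a ^ 2))
  have hvol : volume C = volume (Set.Ioc (1 + a) (1 + b)) *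
      volume (Metric.closedBall (0 : EuclideanSpace ℝ (Fin n)) √(1 - a ^ 2)) :=
    volume_cylinder measurableSet_Ioc measurableSet_closedBall
  have hfin : volume C ≠ ⊤ := by
    rw [hvol]
    exact ENNReal.mul_ne_top (by simp) measure_closedBall_lt_top.ne
  calc _ ≤ _ := ENNReal.toReal_mono hfin
        (measure_mono (ballSlice_single_zero_subset_cylinder ha b))
    _ = (b - a) * (√(1 - a ^ 2) ^ n * vball n) := by
        rw [hvol, ENNReal.toReal_mul, Real.volume_Ioc, ENNReal.toReal_ofReal (by linarith),
          volume_closedBall_zero_toReal (Real.sqrt_nonneg _)]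
        ring_nf
    _ ≤ (1 - a) * (√(1 - a ^ 2) ^ n * vball n) := by
        gcongr
        exact mul_nonneg (by positivity) ENNReal.toReal_nonneg
    _ = _ := by rw [hsqrt, Nat.add_sub_cancel]; ring
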